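/- arXiv:1801.01945 — 4 statements merged into one kernel-verified Lean document; each statement's English description precedes it below -/
import Mathlib

section
/- Area argument, complex version: Let Q = P1P2P3P4 be a cyclic quadrilateral in ℂ (four points on a common circle), and let (λ1,...,λ4) be an affine dependence of the Pi. Let γ1,...,γ4 : [t0,t1] → ℂ be piecewise C¹ curves such that for each t, the quadrilateral γ1(t)γ2(t)γ3(t)γ4(t) is directly similar to Q (i.e., there exist o(t) ∈ ℂ and ρ(t) ∈ ℂ \ {0} with γi(t) = o(t) + ρ(t)(Pi − O), where O is the circumcenter of Q). Then Σᵢ₌₁⁴ λi ∫_{t0}^{t1} γi(t) d(conj γi(t)) = 0. -/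
open scoped ComplexConjugate

/-!
Put `wᵢ = Pᵢ - O`. The vector `(γᵢ(t))ᵢ` stays in the closed subspace of `ℂ⁴` spanned by `1` and
`w`, so its derivative does too: `γᵢ'(t) = c + d wᵢ`. In `Σ λᵢ (a + b wᵢ) conj (c + d wᵢ)` every term then vanishes, by `Σ λᵢ = 0`, by `Σ λᵢ wᵢ = 0` and
its conjugate, and because `wᵢ conj wᵢ = r²` does not depend on `i`. Hence the integrand of
`Σ λᵢ ∫ γᵢ d(conj γᵢ)` is identically zero.
-/

theorem HasDerivAt.mem_of_forall_mem {𝕜 F : Type*} [NontriviallyNormedField 𝕜]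
    [NormedAddCommGroup F] [NormedSpace 𝕜 F] {f : 𝕜 → F} {f' : F} {x : 𝕜} {V : Submodule 𝕜 F}
    (hV : IsClosed (V : Set F)) (hfV : ∀ t, f t ∈ V) (hf : HasDerivAt f f' x) : f' ∈ V :=
  hV.mem_of_tendsto hf.tendsto_slope_zero
    (Filter.Eventually.of_forall fun _ => V.smul_mem _ (V.sub_mem (hfV _) (hfV _)))

theorem exists_eq_add_mul_of_hasDerivAt {ι : Type*} [Fintype ι] {w : ι → ℂ} {f : ι → ℝ → ℂ}
    {f' : ι → ℂ} {x : ℝ} (hf : ∀ i, HasDerivAt (f i) (f' i) x)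
    (hfw : ∀ t, ∃ a b : ℂ, ∀ i, f i t = a + b * w i) :
    ∃ c d : ℂ, ∀ i, f' i = c + d * w i := by
  let V : Submodule ℂ (ι → ℂ) := Submodule.span ℂ {1, w}
  have hmem : ∀ v, v ∈ V ↔ ∃ c d : ℂ, ∀ i, v i = c + d * w i := fun v => by
    simp only [V, Submodule.mem_span_pair, funext_iff, eq_comm (b := v _)]
    simp [smul_eq_mul]
  have hV : IsClosed (V.restrictScalars ℝ : Set (ι → ℂ)) := V.closed_of_finiteDimensional
  refine (hmem f').1 (HasDerivAt.mem_of_forall_mem hV (f := fun t i => f i t) (fun t => ?_)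
    (hasDerivAt_pi.2 hf))
  exact (hmem _).2 (hfw t)

theorem sum_mul_mul_conj_eq_zero_of_norm_eq {ι : Type*} [Fintype ι] {lam : ι → ℝ} {w : ι → ℂ}
    {r : ℝ} (hw : ∀ i, ‖w i‖ = r) (hsum : ∑ i, lam i = 0) (hdep : ∑ i, (lam i : ℂ) * w i = 0)
    (a b c d : ℂ) :
    ∑ i, (lam i : ℂ) * ((a + b * w i) * conj (c + d * w i)) = 0 := by
  have hconj : ∑ i, (lam i : ℂ) * conj (w i) = 0 := by
    simpa using congrArg conj hdep
  have hsumℂ : ∑ i, (lam i : ℂ) = 0 := by exact_mod_cast hsum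
  have hterm : ∀ i, (lam i : ℂ) * ((a + b * w i) * conj (c + d * w i)) =
      (a * conj c + b * conj d * r ^ 2) * lam i + a * conj d * (lam i * conj (w i))
        + b * conj c * (lam i * w i) := fun i => by
    have : w i * conj (w i) = (r : ℂ) ^ 2 := by
      rw [Complex.mul_conj, Complex.normSq_eq_norm_sq, hw i]; push_cast; rfl
    simp only [map_add, map_mul]
    linear_combination (lam i : ℂ) * b * conj d * this
  simp only [hterm, Finset.sum_add_distrib, ← Finset.mul_sum, hsumℂ, hconj, hdep, mul_zero,
    add_zero]

theorem stmt1_general (t0 t1 : ℝ)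
    (P : Fin 4 → ℂ) (O : ℂ) (r : ℝ)
    (hcirc : ∀ i, ‖P i - O‖ = r)
    (lam : Fin 4 → ℝ)
    (hsum : ∑ i, lam i = 0)
    (hdep : ∑ i, (lam i : ℂ) • P i = 0)
    (γ γ' : Fin 4 → ℝ → ℂ)
    (hderiv : ∀ i t, HasDerivAt (γ i) (γ' i t) t)
    (hcont : ∀ i, Continuous (γ' i))
    (o ρ : ℝ → ℂ)
    (hsim : ∀ i t, γ i t = o t + ρ t * (P i - O)) :
    ∑ i, (lam i : ℂ) * ∫ t in t0..t1, γ i t * (starRingEnd ℂ) (γ' i t) = 0 := by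
  have hdepO : ∑ i, (lam i : ℂ) * (P i - O) = 0 := by
    have hsumℂ : ∑ i, (lam i : ℂ) = 0 := by exact_mod_cast hsum
    simp only [smul_eq_mul] at hdep
    simp only [mul_sub, Finset.sum_sub_distrib, ← Finset.sum_mul, hdep, hsumℂ, zero_mul, sub_zero]
  have hpointwise : ∀ t, ∑ i, (lam i : ℂ) * (γ i t * conj (γ' i t)) = 0 := fun t => by
    obtain ⟨c, d, hγ'⟩ := exists_eq_add_mul_of_hasDerivAt (fun i => hderiv i t)
      fun s => ⟨o s, ρ s, fun i => hsim i s⟩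
    simp only [hsim _ t, hγ']
    exact sum_mul_mul_conj_eq_zero_of_norm_eq hcirc hsum hdepO _ _ _ _
  have hint : ∀ i ∈ Finset.univ, IntervalIntegrable
      (fun t => (lam i : ℂ) * (γ i t * conj (γ' i t))) MeasureTheory.volume t0 t1 :=
    fun i _ => (continuous_const.mul ((continuous_iff_continuousAt.2 fun t =>
      (hderiv i t).continuousAt).mul (Complex.continuous_conj.comp (hcont i)))).intervalIntegrable _ _
  simp_rw [← intervalIntegral.integral_const_mul, ← intervalIntegral.integral_finsetSum hint,
    hpointwise, intervalIntegral.integral_zero]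

/-- Area argument, complex version: Let `P₁P₂P₃P₄` be a cyclic quadrilateral in `ℂ`
(circumcenter `O`, radius `r > 0`), `(λ₁,…,λ₄)` an affine dependence of the `Pᵢ`, and
`γ₁,…,γ₄ : [t₀,t₁] → ℂ` be (piecewise) C¹ curves such that for each `t` the quadrilateral
`γ₁(t)γ₂(t)γ₃(t)γ₄(t)` is directly similar to `Q`, i.e. `γᵢ(t) = o(t) + ρ(t)(Pᵢ − O)` with
`ρ(t) ≠ 0`.  Then `Σᵢ λᵢ ∫ γᵢ d(conj γᵢ) = 0`. -/
theorem stmt1 (t0 t1 : ℝ)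
    (P : Fin 4 → ℂ) (O : ℂ) (r : ℝ) (hr : 0 < r)
    (hcirc : ∀ i, ‖P i - O‖ = r)
    (lam : Fin 4 → ℝ) (hlam : lam ≠ 0)
    (hsum : ∑ i, lam i = 0)
    (hdep : ∑ i, (lam i : ℂ) • P i = 0)
    (γ γ' : Fin 4 → ℝ → ℂ)
    (hderiv : ∀ i t, HasDerivAt (γ i) (γ' i t) t)
    (hcont : ∀ i, Continuous (γ' i))
    (o ρ : ℝ → ℂ) (hρ : ∀ t, ρ t ≠ 0)
    (hsim : ∀ i t, γ i t = o t + ρ t * (P i - O)) :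
    ∑ i, (lam i : ℂ) * ∫ t in t0..t1, γ i t * (starRingEnd ℂ) (γ' i t) = 0 :=
  stmt1_general t0 t1 P O r hcirc lam hsum hdep γ γ' hderiv hcont o ρ hsim
end

section
/- Pointwise form of the area argument: Let P1,...,P4 ∈ ℂ lie on a circle centered at the origin, and let (λ1,...,λ4) be an affine dependence of P1,...,P4. Let o, ρ : [t0,t1] → ℂ be C¹, with ρ nonvanishing, and set γi(t) = o(t) + ρ(t)Pi. Then for all t, Σᵢ λi γi(t) · conj(γi'(t)) = 0. -/
/-!
Expanding `(a + b Pᵢ) · conj (c + d Pᵢ)` writes the weighted sum as a combination of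
`∑ λᵢ`, `∑ λᵢ Pᵢ`, `∑ λᵢ conj Pᵢ` and `∑ λᵢ |Pᵢ|²`. The first two vanish by affine dependence,
the third is the conjugate of the second because the weights are real, and the fourth is
`r² ∑ λᵢ` because the points lie on a circle about the origin.
-/

open Finset ComplexConjugate

variable {ι : Type*} [Fintype ι] {lam : ι → ℝ} {P : ι → ℂ}

lemma sum_ofReal_mul_conj_eq_zero (hdep : ∑ i, (lam i : ℂ) * P i = 0) :
    ∑ i, (lam i : ℂ) * conj (P i) = 0 := by
  simpa [map_sum] using congrArg conj hdep

lemma sum_ofReal_mul_mul_conj_eq_zero (r : ℝ) (hP : ∀ i, ‖P i‖ = r)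
    (hsum : ∑ i, lam i = 0) : ∑ i, (lam i : ℂ) * (P i * conj (P i)) = 0 := by
  simp only [Complex.mul_conj, Complex.normSq_eq_norm_sq, hP, ← sum_mul, ← Complex.ofReal_sum,
    hsum, Complex.ofReal_zero, zero_mul]

theorem sum_ofReal_mul_affine_mul_conj_affine_eq_zero (r : ℝ) (hP : ∀ i, ‖P i‖ = r)
    (hsum : ∑ i, lam i = 0) (hdep : ∑ i, (lam i : ℂ) * P i = 0) (a b c d : ℂ) :
    ∑ i, (lam i : ℂ) * ((a + b * P i) * conj (c + d * P i)) = 0 := by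
  have hsum' : ∑ i, (lam i : ℂ) = 0 := by exact_mod_cast hsum
  have expand : ∀ i, (lam i : ℂ) * ((a + b * P i) * conj (c + d * P i)) =
      lam i * (a * conj c) + a * conj d * (lam i * conj (P i)) + b * conj c * (lam i * P i)
        + b * conj d * (lam i * (P i * conj (P i))) := by
    intro i
    simp only [map_add, map_mul]
    ring
  simp only [expand, sum_add_distrib, ← sum_mul, ← mul_sum, hsum', hdep,
    sum_ofReal_mul_conj_eq_zero hdep, sum_ofReal_mul_mul_conj_eq_zero r hP hsum,
    zero_mul, mul_zero, add_zero]

theorem stmt2_general (r : ℝ)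
    (P : Fin 4 → ℂ) (hP : ∀ i, ‖P i‖ = r)
    (lam : Fin 4 → ℝ)
    (hsum : ∑ i, lam i = 0)
    (hdep : ∑ i, (lam i : ℂ) • P i = 0)
    (o ρ o' ρ' : ℝ → ℂ) :
    ∀ t : ℝ, ∑ i, (lam i : ℂ) *
      ((o t + ρ t * P i) * (starRingEnd ℂ) (o' t + ρ' t * P i)) = 0 := fun t =>
  sum_ofReal_mul_affine_mul_conj_affine_eq_zero r hP hsum (by simpa only [smul_eq_mul] using hdep)
    (o t) (ρ t) (o' t) (ρ' t)

/-- Pointwise form of the area argument: Let `P₁,…,P₄ ∈ ℂ` lie on a circle of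
radius `r` centered at the origin and let `(λ₁,…,λ₄)` be an affine dependence of the `Pᵢ`.
Let `o, ρ : ℝ → ℂ` be C¹ with `ρ` nonvanishing, and set `γᵢ(t) = o(t) + ρ(t)·Pᵢ`
(so `γᵢ'(t) = o'(t) + ρ'(t)·Pᵢ`).  Then for all `t`,
`Σᵢ λᵢ · γᵢ(t) · conj(γᵢ'(t)) = 0`. -/
theorem stmt2 (r : ℝ)
    (P : Fin 4 → ℂ) (hP : ∀ i, ‖P i‖ = r)
    (lam : Fin 4 → ℝ) (hlam : lam ≠ 0)
    (hsum : ∑ i, lam i = 0)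
    (hdep : ∑ i, (lam i : ℂ) • P i = 0)
    (o ρ o' ρ' : ℝ → ℂ)
    (ho : ∀ t, HasDerivAt o (o' t) t)
    (hρderiv : ∀ t, HasDerivAt ρ (ρ' t) t)
    (hρ : ∀ t, ρ t ≠ 0) :
    ∀ t : ℝ, ∑ i, (lam i : ℂ) *
      ((o t + ρ t * P i) * (starRingEnd ℂ) (o' t + ρ' t * P i)) = 0 :=
  stmt2_general r P hP lam hsum hdep o ρ o' ρ'
end

section
/- Corollary on equal areas: Let P1P2P3P4 be a cyclic quadrilateral in ℂ (no three vertices collinear), and let γ1,...,γ4 : [t0,t1] → ℂ be piecewise C¹ closed curves such that for each t the quadrilateral γ1(t)γ2(t)γ3(t)γ4(t) is directly similar to P1P2P3P4. If γ1, γ2, γ3 each enclose signed area A (in the sense of Green's integral −∫ y dx), then γ4 also encloses signed area A. -/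
/-!
For `γ_z(t) = o(t) + ρ(t) z` the Green area `-∫ Im γ_z · (Re γ_z)'` is a real quadratic
polynomial in `z`. Its quadratic part is a multiple of `‖z‖²`: the remaining quadratic terms are
`Re (Im z · z · ρ ρ')`, whose integral vanishes because `ρ ρ' = (ρ² / 2)'` and `ρ` is closed.
On the circle `‖z - O‖ = r` the term `‖z‖²` is affine in `z`, so the area is an affine function
of the vertex. Taking the same value at three non-collinear vertices, it is constant.
-/

open MeasureTheory Module

theorem vectorSpan_eq_top_of_not_collinear {k V P : Type*} [Field k] [AddCommGroup V] [Module k V]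
    [AddTorsor V P] (hV : finrank k V = 2) {s : Set P} (hs : ¬Collinear k s) :
    vectorSpan k s = ⊤ := by
  have : FiniteDimensional k V := Module.finite_of_finrank_eq_succ hV
  rw [collinear_iff_finrank_le_one, not_le] at hs
  exact Submodule.eq_top_of_finrank_eq <| le_antisymm (Submodule.finrank_le _) (by omega)

theorem LinearMap.eq_zero_of_not_collinear {k V W : Type*} [Field k] [AddCommGroup V]
    [Module k V] [AddCommGroup W] [Module k W] (hV : finrank k V = 2) {p₀ p₁ p₂ : V}
    (h : ¬Collinear k {p₀, p₁, p₂}) (ℓ : V →ₗ[k] W) (h₁ : ℓ p₁ = ℓ p₀) (h₂ : ℓ p₂ = ℓ p₀) :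
    ℓ = 0 := by
  have hspan := vectorSpan_eq_top_of_not_collinear hV h
  rw [vectorSpan_eq_span_vsub_set_right k (Set.mem_insert p₀ _)] at hspan
  refine LinearMap.ext_on hspan ?_
  rintro _ ⟨p, hp | hp | hp, rfl⟩ <;> simp_all

theorem exists_affine_eq_add_norm_sq_on_sphere {E : Type*} [NormedAddCommGroup E]
    [InnerProductSpace ℝ E] (a c : ℝ) (ℓ : E →ₗ[ℝ] ℝ) (O : E) (r : ℝ) :
    ∃ (b : ℝ) (m : E →ₗ[ℝ] ℝ), ∀ z ∈ Metric.sphere O r, a + ℓ z + c * ‖z‖ ^ 2 = b + m z := by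
  refine ⟨a + c * (r ^ 2 - ‖O‖ ^ 2), ℓ + (2 * c) • innerₗ E O, fun z hz => ?_⟩
  have hnorm := norm_sub_sq_real O z
  rw [norm_sub_rev, mem_sphere_iff_norm.1 hz] at hnorm
  simp only [LinearMap.add_apply, LinearMap.smul_apply, innerₗ_apply_apply, smul_eq_mul]
  linear_combination -c * hnorm

theorem integral_re_const_mul_mul_deriv_eq_zero {ρ ρ' : ℝ → ℂ} {t0 t1 : ℝ}
    (hρ : ∀ t, HasDerivAt ρ (ρ' t) t) (hρ' : Continuous ρ') (hρcl : ρ t0 = ρ t1) (w : ℂ) :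
    ∫ t in t0..t1, (w * (ρ t * ρ' t)).re = 0 := by
  have cρ : Continuous ρ := continuous_iff_continuousAt.2 fun t => (hρ t).continuousAt
  have hint : IntervalIntegrable (fun t => w * (ρ t * ρ' t)) volume t0 t1 :=
    (by fun_prop : Continuous _).intervalIntegrable _ _
  have hexact : ∫ t in t0..t1, w * (ρ t * ρ' t) = 0 := by
    have hderiv : ∀ t, HasDerivAt (fun t => w * (ρ t * ρ t) / 2) (w * (ρ t * ρ' t)) t := fun t =>
      (((hρ t).fun_mul (hρ t)).const_mul w).div_const 2 |>.congr_deriv (by ring)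
    rw [intervalIntegral.integral_eq_sub_of_hasDerivAt (fun t _ => hderiv t) hint, hρcl, sub_self]
  simpa [hexact] using intervalIntegral.intervalIntegral_re hint

theorem exists_integral_im_mul_re_eq_add_linear_add_norm_sq {o ρ o' ρ' : ℝ → ℂ} {t0 t1 : ℝ}
    (ho : ∀ t, HasDerivAt o (o' t) t) (hρ : ∀ t, HasDerivAt ρ (ρ' t) t)
    (ho' : Continuous o') (hρ' : Continuous ρ') (hρcl : ρ t0 = ρ t1) :
    ∃ (a c : ℝ) (ℓ : ℂ →ₗ[ℝ] ℝ), ∀ z : ℂ,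
      ∫ t in t0..t1, (o t + ρ t * z).im * (o' t + ρ' t * z).re = a + ℓ z + c * ‖z‖ ^ 2 := by
  have co : Continuous o := continuous_iff_continuousAt.2 fun t => (ho t).continuousAt
  have cρ : Continuous ρ := continuous_iff_continuousAt.2 fun t => (hρ t).continuousAt
  refine ⟨∫ t in t0..t1, (o t).im * (o' t).re, ∫ t in t0..t1, (ρ t).im * (ρ' t).re,
    (∫ t in t0..t1, ((o t).im * (ρ' t).re + (ρ t).im * (o' t).re)) • Complex.reLm
      + (∫ t in t0..t1, ((ρ t).re * (o' t).re - (o t).im * (ρ' t).im)) • Complex.imLm,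
    fun z => ?_⟩
  have hexpand : ∀ t, (o t + ρ t * z).im * (o' t + ρ' t * z).re =
      (o t).im * (o' t).re + z.re * ((o t).im * (ρ' t).re + (ρ t).im * (o' t).re)
        + z.im * ((ρ t).re * (o' t).re - (o t).im * (ρ' t).im)
        + ‖z‖ ^ 2 * ((ρ t).im * (ρ' t).re) + (z.im * z * (ρ t * ρ' t)).re := by
    intro t
    simp only [Complex.sq_norm, Complex.normSq_apply, Complex.add_im, Complex.add_re,
      Complex.mul_im, Complex.mul_re, Complex.ofReal_re, Complex.ofReal_im]
    ring
  simp_rw [hexpand]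
  rw [intervalIntegral.integral_add, intervalIntegral.integral_add, intervalIntegral.integral_add,
    intervalIntegral.integral_add, intervalIntegral.integral_const_mul,
    intervalIntegral.integral_const_mul, intervalIntegral.integral_const_mul,
    integral_re_const_mul_mul_deriv_eq_zero hρ hρ' hρcl]
  · simp only [LinearMap.add_apply, LinearMap.smul_apply, Complex.reLm_coe, Complex.imLm_coe,
      smul_eq_mul]
    ring
  all_goals exact (by fun_prop : Continuous _).intervalIntegrable _ _

theorem stmt5_general (t0 t1 : ℝ)
    (P : Fin 4 → ℂ) (O : ℂ) (r : ℝ)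
    (hcirc : ∀ i, ‖P i - O‖ = r)
    (hgen : ∀ i j k : Fin 4, i ≠ j → j ≠ k → i ≠ k →
      ¬ Collinear ℝ ({P i, P j, P k} : Set ℂ))
    (o ρ o' ρ' : ℝ → ℂ)
    (ho : ∀ t, HasDerivAt o (o' t) t)
    (hρderiv : ∀ t, HasDerivAt ρ (ρ' t) t)
    (ho' : Continuous o') (hρ' : Continuous ρ')
    (γ γ' : Fin 4 → ℝ → ℂ)
    (hγ : ∀ i t, γ i t = o t + ρ t * P i)
    (hγ' : ∀ i t, γ' i t = o' t + ρ' t * P i)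
    (hclosed : ∀ i, γ i t0 = γ i t1)
    (A : ℝ)
    (hA : ∀ i : Fin 4, i ≠ 3 →
      -(∫ t in t0..t1, (γ i t).im * (γ' i t).re) = A) :
    -(∫ t in t0..t1, (γ 3 t).im * (γ' 3 t).re) = A := by
  have hgen012 := hgen 0 1 2 (by decide) (by decide) (by decide)
  have hP01 : P 0 ≠ P 1 := fun h => hgen012 <| by
    rw [h, Set.insert_eq_of_mem (Set.mem_insert _ _)]
    exact collinear_pair ℝ _ _
  have hρcl : ρ t0 = ρ t1 := by
    have h0 := hclosed 0
    have h1 := hclosed 1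
    simp only [hγ] at h0 h1
    have h : (ρ t0 - ρ t1) * (P 0 - P 1) = 0 := by linear_combination h0 - h1
    simpa [sub_eq_zero, hP01] using h
  obtain ⟨a, c, ℓ, hF⟩ :=
    exists_integral_im_mul_re_eq_add_linear_add_norm_sq ho hρderiv ho' hρ' hρcl
  obtain ⟨b, m, hm⟩ := exists_affine_eq_add_norm_sq_on_sphere a c ℓ O r
  have harea : ∀ i, -(∫ t in t0..t1, (γ i t).im * (γ' i t).re) = -(b + m (P i)) := fun i => by
    simp only [hγ, hγ', hF, hm _ (mem_sphere_iff_norm.2 (hcirc i))]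
  have hm0 : m = 0 := m.eq_zero_of_not_collinear Complex.finrank_real_complex hgen012
    (by linarith [harea 0, harea 1, hA 0 (by decide), hA 1 (by decide)])
    (by linarith [harea 0, harea 2, hA 0 (by decide), hA 2 (by decide)])
  rw [harea, ← hA 0 (by decide), harea, hm0, LinearMap.zero_apply, LinearMap.zero_apply]

/-- Corollary on equal areas: Let `P₁P₂P₃P₄` be a cyclic quadrilateral in `ℂ`
(no three vertices collinear) and let `γᵢ(t) = o(t) + ρ(t)·Pᵢ` (with `ρ(t) ≠ 0`) be C¹ closed
curves of quadrilaterals directly similar to `P₁P₂P₃P₄`.  If `γ₁, γ₂, γ₃` each enclose signed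
area `A` (Green's integral `−∫ y dx`), then so does `γ₄`. -/
theorem stmt5 (t0 t1 : ℝ)
    (P : Fin 4 → ℂ) (O : ℂ) (r : ℝ) (hr : 0 < r)
    (hcirc : ∀ i, ‖P i - O‖ = r)
    (hgen : ∀ i j k : Fin 4, i ≠ j → j ≠ k → i ≠ k →
      ¬ Collinear ℝ ({P i, P j, P k} : Set ℂ))
    (o ρ o' ρ' : ℝ → ℂ)
    (ho : ∀ t, HasDerivAt o (o' t) t)
    (hρderiv : ∀ t, HasDerivAt ρ (ρ' t) t)
    (ho' : Continuous o') (hρ' : Continuous ρ')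
    (hρ : ∀ t, ρ t ≠ 0)
    (γ γ' : Fin 4 → ℝ → ℂ)
    (hγ : ∀ i t, γ i t = o t + ρ t * P i)
    (hγ' : ∀ i t, γ' i t = o' t + ρ' t * P i)
    (hclosed : ∀ i, γ i t0 = γ i t1)
    (A : ℝ)
    (hA : ∀ i : Fin 4, i ≠ 3 →
      -(∫ t in t0..t1, (γ i t).im * (γ' i t).re) = A) :
    -(∫ t in t0..t1, (γ 3 t).im * (γ' 3 t).re) = A :=
  stmt5_general t0 t1 P O r hcirc hgen o ρ o' ρ' ho hρderiv ho' hρ' γ γ' hγ hγ' hclosed A hA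
end

section
/- Half-plane transfer lemma: Let P1P2P3P4 and Q1Q2Q3Q4 be two directly similar convex cyclic quadrilaterals with P4 = Q4. Then Q1 lies in the closed right half-plane of the directed line from P1 to P2 if and only if Q3 lies in the closed right half-plane of the directed line from P2 to P3. -/
/-- The planar cross product of two vectors in `ℂ ≅ ℝ²`. -/
def cross (z w : ℂ) : ℝ := z.re * w.im - z.im * w.re

/-- Convex quadrilateral with vertices in counterclockwise order. -/
def CcwQuad (P : Fin 4 → ℂ) : Prop :=
  ∀ i : Fin 4, 0 < cross (P (i + 1) - P i) (P (i + 2) - P (i + 1))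

/-- The four points lie on a common circle (of positive radius). -/
def Concyclic (P : Fin 4 → ℂ) : Prop :=
  ∃ (O : ℂ) (r : ℝ), 0 < r ∧ ∀ i, ‖P i - O‖ = r

/-- `X` lies in the closed right half-plane of the directed line from `A` to `B`. -/
def RightOf (A B X : ℂ) : Prop := cross (B - A) (X - A) ≤ 0

/-!
Write `Q i = P 3 + ρ (P i - P 3)` and `u = ρ - 1`. Then `Q 0 - P 0 = u (P 0 - P 3)` and
`Q 2 - P 1 ≡ u (P 2 - P 3)` modulo `P 2 - P 1`, so the two conditions read `Im (u A) ≤ 0` and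
`Im (u B) ≤ 0` with `A = conj (P 1 - P 0) (P 0 - P 3)` and `B = conj (P 2 - P 1) (P 2 - P 3)`.
Concyclicity says exactly that `A conj B` is real (a cross ratio), and convexity at `P 0` and `P 2`
gives `Im A, Im B < 0`; hence `B` is a positive real multiple of `A`.
-/

open ComplexConjugate

lemma cross_eq_im_conj_mul (z w : ℂ) : cross z w = (conj z * w).im := by
  simp only [cross, Complex.mul_im, Complex.conj_re, Complex.conj_im]
  ring

lemma cross_swap (z w : ℂ) : cross w z = -cross z w := by
  unfold cross; ring

lemma cross_add_self_right (z w : ℂ) : cross z (w + z) = cross z w := by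
  simp only [cross, Complex.add_re, Complex.add_im]
  ring

lemma im_mul_nonpos_iff_of_im_mul_conj_eq_zero {A B : ℂ} (hAB : (A * conj B).im = 0)
    (hA : A.im < 0) (hB : B.im < 0) (u : ℂ) : (u * A).im ≤ 0 ↔ (u * B).im ≤ 0 := by
  have key : B.im * (u * A).im = A.im * (u * B).im := by
    simp only [Complex.mul_im, Complex.conj_re, Complex.conj_im] at hAB ⊢
    linear_combination (-u.im) * hAB
  calc (u * A).im ≤ 0 ↔ B.im * 0 ≤ B.im * (u * A).im := (mul_le_mul_left_of_neg hB).symm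
    _ ↔ A.im * 0 ≤ A.im * (u * B).im := by rw [key, mul_zero, mul_zero]
    _ ↔ (u * B).im ≤ 0 := mul_le_mul_left_of_neg hA

lemma conj_eq_sq_norm_div {z : ℂ} (hz : z ≠ 0) : conj z = (‖z‖ ^ 2 : ℝ) / z := by
  rw [eq_div_iff hz, mul_comm, Complex.mul_conj, Complex.normSq_eq_norm_sq]

/-- The cross ratio of four concyclic points is real. -/
lemma im_mul_conj_eq_zero_of_norm_eq {a b c d O : ℂ} {r : ℝ} (hr : 0 < r)
    (ha : ‖a - O‖ = r) (hb : ‖b - O‖ = r) (hc : ‖c - O‖ = r) (hd : ‖d - O‖ = r) :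
    ((a - d) * (c - b) * conj ((b - a) * (c - d))).im = 0 := by
  have hne : ∀ {z : ℂ}, ‖z - O‖ = r → z - O ≠ 0 := fun h h0 => by
    rw [h0, norm_zero] at h; exact hr.ne h
  -- Centred at `O`, `conj z = r ^ 2 / z`: conjugation scales both factors by `r ^ 4 / (a b c d)`.
  rw [← Complex.conj_eq_iff_im, map_mul, Complex.conj_conj]
  rw [← sub_sub_sub_cancel_right a d O, ← sub_sub_sub_cancel_right c b O,
    ← sub_sub_sub_cancel_right b a O, ← sub_sub_sub_cancel_right c d O]
  simp only [map_mul, map_sub, conj_eq_sq_norm_div (hne ha), conj_eq_sq_norm_div (hne hb),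
    conj_eq_sq_norm_div (hne hc), conj_eq_sq_norm_div (hne hd), ha, hb, hc, hd]
  field_simp [hne ha, hne hb, hne hc, hne hd]
  ring

theorem stmt10_general (P Q : Fin 4 → ℂ)
    (hPcon : Concyclic P) (hPccw : CcwQuad P)
    (a ρ : ℂ) (hsim : ∀ i, Q i = a + ρ * P i)
    (h4 : Q 3 = P 3) :
    RightOf (P 0) (P 1) (Q 0) ↔ RightOf (P 1) (P 2) (Q 2) := by
  obtain ⟨O, r, hr, hcirc⟩ := hPcon
  have hQ0 : Q 0 - P 0 = (ρ - 1) * (P 0 - P 3) := by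
    linear_combination hsim 0 + h4 - hsim 3
  have hQ2 : Q 2 - P 1 = (ρ - 1) * (P 2 - P 3) + (P 2 - P 1) := by
    linear_combination hsim 2 + h4 - hsim 3
  have hturn0 : (conj (P 1 - P 0) * (P 0 - P 3)).im < 0 := by
    have h := hPccw 3
    rw [show (3 : Fin 4) + 1 = 0 from rfl, show (3 : Fin 4) + 2 = 1 from rfl, cross_swap,
      cross_eq_im_conj_mul] at h
    linarith
  have hturn1 : (conj (P 2 - P 1) * (P 2 - P 3)).im < 0 := by
    have h := hPccw 1
    rw [show (1 : Fin 4) + 1 = 2 from rfl, show (1 : Fin 4) + 2 = 3 from rfl,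
      ← neg_sub (P 2) (P 3), cross_eq_im_conj_mul, mul_neg, Complex.neg_im] at h
    linarith
  have hpar :
      (conj (P 1 - P 0) * (P 0 - P 3) * conj (conj (P 2 - P 1) * (P 2 - P 3))).im = 0 := by
    have h := im_mul_conj_eq_zero_of_norm_eq hr (hcirc 0) (hcirc 1) (hcirc 2) (hcirc 3)
    rw [← h]
    simp only [map_mul, Complex.conj_conj]
    congr 1
    ring
  unfold RightOf
  rw [hQ0, hQ2, cross_add_self_right, cross_eq_im_conj_mul, cross_eq_im_conj_mul, mul_left_comm,
    mul_left_comm (conj _)]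
  exact im_mul_nonpos_iff_of_im_mul_conj_eq_zero hpar hturn0 hturn1 (ρ - 1)

/-- Half-plane transfer lemma: Let `P₁P₂P₃P₄` and `Q₁Q₂Q₃Q₄` be directly similar
convex cyclic quadrilaterals with `P₄ = Q₄`.  Then `Q₁` lies to the right of the directed line
`P₁P₂` iff `Q₃` lies to the right of the directed line `P₂P₃`. -/
theorem stmt10 (P Q : Fin 4 → ℂ)
    (hPcon : Concyclic P) (hPccw : CcwQuad P)
    (hQcon : Concyclic Q) (hQccw : CcwQuad Q)
    (a ρ : ℂ) (hρ : ρ ≠ 0) (hsim : ∀ i, Q i = a + ρ * P i)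
    (h4 : Q 3 = P 3) :
    RightOf (P 0) (P 1) (Q 0) ↔ RightOf (P 1) (P 2) (Q 2) :=
  stmt10_general P Q hPcon hPccw a ρ hsim h4
end
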